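/- arXiv:2011.10225 — 3 statements merged into one kernel-verified Lean document; each statement's English description precedes it below -/
import Mathlib

section
/- Every compactly supported continuous function g : ℝ → ℝ can be approximated in the sup norm by elements of 𝒳 = Span{ReLU(a·x + b) : a ≠ 0, b ∈ ℝ}: for every ε > 0 there exists h ∈ 𝒳 with sup_{x ∈ ℝ} |g(x) - h(x)| < ε. -/
noncomputable def ReLU (t : ℝ) : ℝ := max t 0

noncomputable def Xspan : Submodule ℝ (ℝ → ℝ) :=
  Submodule.span ℝ {f | ∃ a b : ℝ, a ≠ 0 ∧ f = fun x => ReLU (a * x + b)}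

lemma relu_translate_mem (c : ℝ) : (fun x => ReLU (x - c)) ∈ Xspan := by
  apply Submodule.subset_span
  exact ⟨1, -c, one_ne_zero, by funext x; rw [one_mul, ← sub_eq_add_neg]⟩

lemma hat_mem (δ c : ℝ) :
    (fun x => (ReLU (x - (c - δ)) - 2 * ReLU (x - c) + ReLU (x - (c + δ))) / δ) ∈ Xspan := by
  have h1 := relu_translate_mem (c - δ)
  have h2 := relu_translate_mem c
  have h3 := relu_translate_mem (c + δ)
  have key : (fun x => (ReLU (x - (c - δ)) - 2 * ReLU (x - c) + ReLU (x - (c + δ))) / δ)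
      = δ⁻¹ • ((fun x => ReLU (x - (c - δ))) + (-2 : ℝ) • (fun x => ReLU (x - c))
          + (fun x => ReLU (x - (c + δ)))) := by
    funext x
    simp only [Pi.smul_apply, Pi.add_apply, smul_eq_mul]
    ring
  rw [key]
  exact Submodule.smul_mem _ _ (add_mem (add_mem h1 (Submodule.smul_mem _ _ h2)) h3)

lemma combo (A B u v G : ℝ) (huv : u + v = 1) :
    G - (A * u + B * v) = u * (G - A) + v * (G - B) := by
  linear_combination -G * huv

theorem compactly_supported_approx (g : ℝ → ℝ) (hg : Continuous g)
    (hsupp : HasCompactSupport g) (ε : ℝ) (hε : 0 < ε) :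
    ∃ h ∈ Xspan, ∀ x : ℝ, |g x - h x| < ε := by
  have hu : UniformContinuous g :=
    hg.uniformContinuous_of_tendsto_cocompact hsupp.is_zero_at_infty
  obtain ⟨δ, hδpos, hclose⟩ :
      ∃ δ > 0, ∀ x y : ℝ, |x - y| ≤ δ → |g x - g y| < ε / 2 := by
    obtain ⟨δ', hδ'pos, hδ'⟩ := Metric.uniformContinuous_iff.mp hu (ε / 2) (by linarith)
    refine ⟨δ' / 2, by linarith, fun x y hxy => ?_⟩
    have := hδ' (show dist x y < δ' by rw [Real.dist_eq]; linarith)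
    rwa [Real.dist_eq] at this
  -- support bound
  obtain ⟨R, hR⟩ := (hsupp.isBounded).subset_closedBall 0
  have hg0 : ∀ y : ℝ, R < |y| → g y = 0 := by
    intro y hy
    by_contra h
    have hmem : y ∈ tsupport g := subset_tsupport g h
    have := hR hmem
    rw [Metric.mem_closedBall, Real.dist_eq, sub_zero] at this
    linarith
  obtain ⟨N, hN⟩ := exists_nat_gt (R / δ)
  have hNδ : R < N * δ := by
    rw [div_lt_iff₀ hδpos] at hN; linarith
  have hg0' : ∀ j : ℤ, (j < -(N : ℤ) ∨ (N : ℤ) < j) → g (j * δ) = 0 := by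
    intro j hj
    apply hg0
    rcases hj with hj | hj
    · have hjr : (j : ℝ) ≤ -(N : ℝ) := by exact_mod_cast hj.le
      calc R < N * δ := hNδ
        _ ≤ -(j : ℝ) * δ := by nlinarith
        _ = -((j : ℝ) * δ) := by ring
        _ ≤ |(j : ℝ) * δ| := neg_le_abs _
    · have hjr : (N : ℝ) ≤ (j : ℝ) := by exact_mod_cast hj.le
      calc R < N * δ := hNδ
        _ ≤ (j : ℝ) * δ := by nlinarith
        _ ≤ |(j : ℝ) * δ| := le_abs_self _
  -- the approximant
  set hat : ℝ → ℝ → ℝ := fun c x =>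
    (ReLU (x - (c - δ)) - 2 * ReLU (x - c) + ReLU (x - (c + δ))) / δ with hhat
  refine ⟨∑ j ∈ Finset.Icc (-(N : ℤ)) (N : ℤ), g (j * δ) • hat (j * δ), ?_, ?_⟩
  · apply Submodule.sum_mem
    intro j _
    exact Submodule.smul_mem _ _ (hat_mem δ (j * δ))
  intro x
  set k : ℤ := ⌊x / δ⌋ with hk
  have hk1 : (k : ℝ) * δ ≤ x := by
    have := Int.floor_le (x / δ)
    calc (k : ℝ) * δ ≤ (x / δ) * δ := by nlinarith
      _ = x := by field_simp
  have hk2 : x < ((k : ℝ) + 1) * δ := by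
    have := Int.lt_floor_add_one (x / δ)
    calc x = (x / δ) * δ := by field_simp
      _ < ((k : ℝ) + 1) * δ := by nlinarith
  -- evaluate hat at grid points
  have hat_eval : ∀ j : ℤ, hat ((j : ℝ) * δ) x =
      if j = k then (((k : ℝ) + 1) * δ - x) / δ
      else if j = k + 1 then (x - (k : ℝ) * δ) / δ else 0 := by
    intro j
    rcases lt_trichotomy j k with hj | hj | hj
    · rw [if_neg (by omega), if_neg (by omega)]
      have hjr : (j : ℝ) + 1 ≤ (k : ℝ) := by exact_mod_cast hj
      simp only [hhat, ReLU]
      rw [max_eq_left (by nlinarith), max_eq_left (by nlinarith), max_eq_left (by nlinarith)]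
      ring
    · subst hj
      rw [if_pos rfl]
      simp only [hhat, ReLU]
      rw [max_eq_left (by nlinarith), max_eq_left (by nlinarith), max_eq_right (by nlinarith)]
      ring
    · rcases eq_or_lt_of_le (by omega : k + 1 ≤ j) with hj' | hj'
      · rw [if_neg (by omega), if_pos hj'.symm, ← hj']
        simp only [hhat, ReLU]
        push_cast
        rw [max_eq_left (by nlinarith), max_eq_right (by nlinarith), max_eq_right (by nlinarith)]
        ring
      · rw [if_neg (by omega), if_neg (by omega)]
        have hjr : (k : ℝ) + 2 ≤ (j : ℝ) := by exact_mod_cast (by omega : k + 2 ≤ j)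
        simp only [hhat, ReLU]
        rw [max_eq_right (by nlinarith), max_eq_right (by nlinarith),
          max_eq_right (by nlinarith)]
        ring
  -- compute h x
  have hx_eval : (∑ j ∈ Finset.Icc (-(N : ℤ)) (N : ℤ), g (j * δ) • hat (j * δ)) x
      = g ((k : ℝ) * δ) * ((((k : ℝ) + 1) * δ - x) / δ)
        + g (((k : ℝ) + 1) * δ) * ((x - (k : ℝ) * δ) / δ) := by
    rw [Finset.sum_apply]
    have hterm : ∀ j ∈ Finset.Icc (-(N : ℤ)) (N : ℤ),
        (g ((j : ℝ) * δ) • hat ((j : ℝ) * δ)) x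
        = (if j = k then g ((j : ℝ) * δ) * ((((k : ℝ) + 1) * δ - x) / δ) else 0)
          + (if j = k + 1 then g ((j : ℝ) * δ) * ((x - (k : ℝ) * δ) / δ) else 0) := by
      intro j _
      rw [Pi.smul_apply, smul_eq_mul, hat_eval j]
      rcases eq_or_ne j k with h1 | h1
      · subst h1; rw [if_pos rfl, if_pos rfl, if_neg (by omega)]; ring
      · rw [if_neg h1, if_neg h1]
        rcases eq_or_ne j (k + 1) with h2 | h2
        · subst h2; rw [if_pos rfl, if_pos rfl]; ring
        · rw [if_neg h2, if_neg h2]; ring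
    rw [Finset.sum_congr rfl hterm, Finset.sum_add_distrib,
      Finset.sum_ite_eq' _ k, Finset.sum_ite_eq' _ (k + 1)]
    have hcase : ∀ (m : ℤ) (w : ℝ),
        (if m ∈ Finset.Icc (-(N : ℤ)) (N : ℤ) then g ((m : ℝ) * δ) * w else 0)
        = g ((m : ℝ) * δ) * w := by
      intro m w
      split_ifs with hm
      · rfl
      · rw [Finset.mem_Icc, not_and_or, not_le, not_le] at hm
        rw [hg0' m hm]; ring
    rw [hcase k, hcase (k + 1)]
    push_cast
    ring
  rw [hx_eval]
  -- estimate
  have e1 : |g x - g ((k : ℝ) * δ)| < ε / 2 := by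
    apply hclose
    rw [abs_of_nonneg (by linarith)]
    nlinarith
  have e2 : |g x - g (((k : ℝ) + 1) * δ)| < ε / 2 := by
    apply hclose
    rw [abs_of_nonpos (by linarith)]
    nlinarith
  have hu0 : 0 ≤ (((k : ℝ) + 1) * δ - x) / δ := div_nonneg (by linarith) hδpos.le
  have hv0 : 0 ≤ (x - (k : ℝ) * δ) / δ := div_nonneg (by linarith) hδpos.le
  have hu1 : (((k : ℝ) + 1) * δ - x) / δ ≤ 1 := by
    rw [div_le_one hδpos]; linarith
  have hv1 : (x - (k : ℝ) * δ) / δ ≤ 1 := by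
    rw [div_le_one hδpos]; linarith
  have huv : (((k : ℝ) + 1) * δ - x) / δ + (x - (k : ℝ) * δ) / δ = 1 := by
    field_simp
    ring
  calc |g x - (g ((k : ℝ) * δ) * ((((k : ℝ) + 1) * δ - x) / δ)
        + g (((k : ℝ) + 1) * δ) * ((x - (k : ℝ) * δ) / δ))|
      = |(((k : ℝ) + 1) * δ - x) / δ * (g x - g ((k : ℝ) * δ))
        + (x - (k : ℝ) * δ) / δ * (g x - g (((k : ℝ) + 1) * δ))| := by
        rw [combo _ _ _ _ _ huv]
    _ ≤ |(((k : ℝ) + 1) * δ - x) / δ * (g x - g ((k : ℝ) * δ))|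
        + |(x - (k : ℝ) * δ) / δ * (g x - g (((k : ℝ) + 1) * δ))| := abs_add_le _ _
    _ = (((k : ℝ) + 1) * δ - x) / δ * |g x - g ((k : ℝ) * δ)|
        + (x - (k : ℝ) * δ) / δ * |g x - g (((k : ℝ) + 1) * δ)| := by
        rw [abs_mul, abs_mul, abs_of_nonneg hu0, abs_of_nonneg hv0]
    _ ≤ |g x - g ((k : ℝ) * δ)| + |g x - g (((k : ℝ) + 1) * δ)| := by
        nlinarith [abs_nonneg (g x - g ((k : ℝ) * δ)),
          abs_nonneg (g x - g (((k : ℝ) + 1) * δ))]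
    _ < ε / 2 + ε / 2 := by linarith
    _ = ε := by ring
end

section
/- Every continuous piecewise linear function g : ℝ → ℝ with compact support lies in 𝒳 = Span{ReLU(a·x + b) : a ≠ 0, b ∈ ℝ}. -/
open Set

def AffineOn (g : ℝ → ℝ) (s : Set ℝ) : Prop :=
  ∃ a b : ℝ, ∀ x ∈ s, g x = a * x + b

theorem AffineOn.congr {g h : ℝ → ℝ} {s : Set ℝ} (hg : AffineOn g s) (hgh : EqOn g h s) :
    AffineOn h s := by
  obtain ⟨a, b, hab⟩ := hg
  exact ⟨a, b, fun x hx => (hgh hx).symm.trans (hab x hx)⟩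

theorem ReLU_sub_of_le {x q : ℝ} (h : x ≤ q) : ReLU (x - q) = 0 :=
  max_eq_right (sub_nonpos.2 h)

theorem ReLU_sub_of_ge {x q : ℝ} (h : q ≤ x) : ReLU (x - q) = x - q :=
  max_eq_left (sub_nonneg.2 h)

theorem ReLU_sub_mem_Xspan (q : ℝ) : (fun x => ReLU (x - q)) ∈ Xspan :=
  Submodule.subset_span ⟨1, -q, one_ne_zero, by simp only [one_mul, ← sub_eq_add_neg]⟩

theorem eqOn_sub_mul_ReLU_sub (g : ℝ → ℝ) (c q : ℝ) :
    EqOn (fun x => g x - c * ReLU (x - q)) g (Iic q) := fun x hx => by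
  simp only [ReLU_sub_of_le (mem_Iic.1 hx), mul_zero, sub_zero]

theorem eq_mul_ReLU_sub_of_affineOn_Ici {g : ℝ → ℝ} {q : ℝ} (hleft : EqOn g 0 (Iic q))
    (hright : AffineOn g (Ici q)) : ∃ c : ℝ, g = fun x => c * ReLU (x - q) := by
  obtain ⟨a, b, hab⟩ := hright
  have hq : a * q + b = 0 := (hab q self_mem_Ici).symm.trans (hleft self_mem_Iic)
  refine ⟨a, funext fun x => ?_⟩
  rcases le_total x q with hxq | hqx
  · rw [hleft hxq, ReLU_sub_of_le hxq, mul_zero, Pi.zero_apply]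
  · rw [hab x hqx, ReLU_sub_of_ge hqx]
    linear_combination hq

theorem affineOn_Ici_sub_mul_ReLU_sub {g : ℝ → ℝ} {p q : ℝ} (hpq : p ≤ q)
    (hmid : AffineOn g (Icc p q)) (hright : AffineOn g (Ici q)) :
    ∃ c : ℝ, AffineOn (fun x => g x - c * ReLU (x - q)) (Ici p) := by
  obtain ⟨a, b, hab⟩ := hmid
  obtain ⟨a', b', hab'⟩ := hright
  have hq : a * q + b = a' * q + b' :=
    (hab q ⟨hpq, le_rfl⟩).symm.trans (hab' q self_mem_Ici)
  refine ⟨a' - a, a, b, fun x hpx => ?_⟩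
  rcases le_total x q with hxq | hqx
  · rw [eqOn_sub_mul_ReLU_sub g _ q hxq, hab x ⟨hpx, hxq⟩]
  · simp only [ReLU_sub_of_ge hqx, hab' x hqx]
    linear_combination -hq

theorem mem_Xspan_of_affineOn_pieces (n : ℕ) (p : Fin (n + 1) → ℝ) (hp : Monotone p)
    (g : ℝ → ℝ) (hleft : EqOn g 0 (Iic (p 0)))
    (hpieces : ∀ i : Fin n, AffineOn g (Icc (p i.castSucc) (p i.succ)))
    (hright : AffineOn g (Ici (p (Fin.last n)))) : g ∈ Xspan := by
  induction n generalizing g with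
  | zero =>
    obtain ⟨c, rfl⟩ := eq_mul_ReLU_sub_of_affineOn_Ici hleft hright
    exact Xspan.smul_mem c (ReLU_sub_mem_Xspan _)
  | succ n ih =>
    set q := p (Fin.last (n + 1))
    have hmid : AffineOn g (Icc (p (Fin.last n).castSucc) q) := by
      simpa only [Fin.succ_last] using hpieces (Fin.last n)
    obtain ⟨c, hc⟩ := affineOn_Ici_sub_mul_ReLU_sub (hp (Fin.le_last _)) hmid hright
    have hle_q : ∀ i, p i ≤ q := fun i => hp (Fin.le_last i)
    have hpeeled : (fun x => g x - c * ReLU (x - q)) ∈ Xspan := by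
      refine ih (p ∘ Fin.castSucc) (hp.comp Fin.strictMono_castSucc.monotone) _
        (fun x hx => ?_) (fun i => ?_) hc
      · exact (eqOn_sub_mul_ReLU_sub g c q (hx.trans (hle_q 0))).trans (hleft hx)
      · refine (hpieces i.castSucc).congr fun x hx => ?_
        exact (eqOn_sub_mul_ReLU_sub g c q (hx.2.trans (hle_q _))).symm
    have hg : g = (fun x => g x - c * ReLU (x - q)) + c • fun x => ReLU (x - q) := by
      ext x
      simp only [Pi.add_apply, Pi.smul_apply, smul_eq_mul, sub_add_cancel]
    rw [hg]
    exact Xspan.add_mem hpeeled (Xspan.smul_mem c (ReLU_sub_mem_Xspan q))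

theorem piecewise_linear_mem_X (g : ℝ → ℝ) (hg : Continuous g) (n : ℕ)
    (p : Fin (n + 1) → ℝ) (hp : StrictMono p)
    (hzero : ∀ x : ℝ, x ∉ Set.Icc (p 0) (p (Fin.last n)) → g x = 0)
    (haffine : ∀ i : Fin n, ∃ a b : ℝ,
      ∀ x ∈ Set.Icc (p i.castSucc) (p i.succ), g x = a * x + b) :
    g ∈ Xspan := by
  have hleft : EqOn g 0 (Iic (p 0)) := by
    have h : EqOn g 0 (Iio (p 0)) := fun x hx => hzero x fun h => (not_le.2 hx) h.1
    simpa only [closure_Iio] using h.closure hg continuous_const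
  have hright : EqOn g 0 (Ici (p (Fin.last n))) := by
    have h : EqOn g 0 (Ioi (p (Fin.last n))) := fun x hx => hzero x fun h => (not_le.2 hx) h.2
    simpa only [closure_Ioi] using h.closure hg continuous_const
  refine mem_Xspan_of_affineOn_pieces n p hp.monotone g hleft haffine ⟨0, 0, fun x hx => ?_⟩
  rw [hright hx, Pi.zero_apply, zero_mul, add_zero]
end

section
/- The linear span 𝒳 = Span{ReLU(a·x + b) : a ≠ 0, b ∈ ℝ} is dense in 𝒴 with respect to the norm ‖f‖_𝒴 = sup_{x ∈ ℝ} |f(x)|/(1 + |x|): for every f ∈ 𝒴 and ε > 0 there exists h ∈ 𝒳 with ‖f - h‖_𝒴 < ε. -/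
def Yset : Set (ℝ → ℝ) :=
  {f | Continuous f ∧
    (∃ L : ℝ, Filter.Tendsto (fun x => f x / (1 + |x|)) Filter.atTop (nhds L)) ∧
    (∃ L : ℝ, Filter.Tendsto (fun x => f x / (1 + |x|)) Filter.atBot (nhds L))}

lemma mem_X (a b : ℝ) (ha : a ≠ 0) : (fun x => ReLU (a * x + b)) ∈ Xspan :=
  Submodule.subset_span ⟨a, b, ha, rfl⟩

lemma mem_X_shift (cc : ℝ) : (fun x : ℝ => ReLU (x - cc)) ∈ Xspan := by
  have := mem_X 1 (-cc) one_ne_zero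
  simpa [sub_eq_add_neg] using this

lemma mem_X_neg (cc : ℝ) : (fun x : ℝ => ReLU (-x - cc)) ∈ Xspan := by
  have := mem_X (-1) (-cc) (by norm_num)
  simpa [sub_eq_add_neg] using this

lemma mem_X_one : (fun _ : ℝ => (1:ℝ)) ∈ Xspan := by
  have h : (fun _ : ℝ => (1:ℝ)) =
      (fun x : ℝ => ReLU (x - (-1))) + (fun x : ℝ => ReLU (-x - 0))
        - (fun x : ℝ => ReLU (x - 0)) - (fun x : ℝ => ReLU (-x - 1)) := by
    funext x
    simp only [Pi.add_apply, Pi.sub_apply, ReLU]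
    rcases le_total x 0 with hx | hx
    · rcases le_total x (-1) with h1 | h1
      · rw [max_eq_right (by linarith : x - (-1) ≤ 0), max_eq_left (by linarith : (0:ℝ) ≤ -x - 0),
          max_eq_right (by linarith : x - 0 ≤ 0), max_eq_left (by linarith : (0:ℝ) ≤ -x - 1)]
        ring
      · rw [max_eq_left (by linarith : (0:ℝ) ≤ x - (-1)), max_eq_left (by linarith : (0:ℝ) ≤ -x - 0),
          max_eq_right (by linarith : x - 0 ≤ 0), max_eq_right (by linarith : -x - 1 ≤ 0)]
        ring
    · rw [max_eq_left (by linarith : (0:ℝ) ≤ x - (-1)), max_eq_right (by linarith : -x - 0 ≤ 0),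
        max_eq_left (by linarith : (0:ℝ) ≤ x - 0), max_eq_right (by linarith : -x - 1 ≤ 0)]
      ring
  rw [h]
  exact sub_mem (sub_mem (add_mem (mem_X_shift (-1)) (mem_X_neg 0)) (mem_X_shift 0)) (mem_X_neg 1)

set_option maxHeartbeats 2000000 in
theorem X_dense_in_Y (f : ℝ → ℝ) (hf : f ∈ Yset) (ε : ℝ) (hε : 0 < ε) :
    ∃ h ∈ Xspan, ∀ x : ℝ, |f x - h x| / (1 + |x|) < ε := by
  obtain ⟨hc, ⟨Lp, hLp⟩, ⟨Lm, hLm⟩⟩ := hf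
  have hε3 : (0:ℝ) < ε/3 := by linarith
  obtain ⟨M1, hM1⟩ := Filter.eventually_atTop.1 (Metric.tendsto_nhds.mp hLp (ε/3) hε3)
  obtain ⟨M2, hM2⟩ := Filter.eventually_atBot.1 (Metric.tendsto_nhds.mp hLm (ε/3) hε3)
  set M : ℝ := max 1 (max M1 (-M2)) with hM
  have hM1le : M1 ≤ M := le_trans (le_max_left _ _) (le_max_right _ _)
  have hM2le : -M ≤ M2 := by
    have : -M2 ≤ M := le_trans (le_max_right _ _) (le_max_right _ _)
    linarith
  have hMone : (1:ℝ) ≤ M := le_max_left _ _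
  have hMpos : (0:ℝ) < M := lt_of_lt_of_le one_pos hMone
  -- tail estimates
  have htop : ∀ x : ℝ, M ≤ x → |f x - Lp * (1 + x)| ≤ ε/3 * (1 + x) := by
    intro x hx
    have hx0 : (0:ℝ) ≤ x := le_trans hMpos.le hx
    have h1 : dist (f x / (1 + |x|)) Lp < ε/3 := hM1 x (le_trans hM1le hx)
    rw [Real.dist_eq, abs_of_nonneg hx0] at h1
    have hpos : (0:ℝ) < 1 + x := by linarith
    have h2 : |f x - Lp * (1+x)| = |f x / (1+x) - Lp| * (1+x) := by
      have hx1 : f x - Lp * (1+x) = (f x / (1+x) - Lp) * (1+x) := by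
        field_simp
      rw [hx1, abs_mul, abs_of_pos hpos]
    rw [h2]
    exact mul_le_mul_of_nonneg_right h1.le hpos.le
  have hbot : ∀ x : ℝ, x ≤ -M → |f x - Lm * (1 - x)| ≤ ε/3 * (1 - x) := by
    intro x hx
    have hx0 : x ≤ 0 := le_trans hx (by linarith)
    have h1 : dist (f x / (1 + |x|)) Lm < ε/3 := hM2 x (le_trans hx hM2le)
    rw [Real.dist_eq, abs_of_nonpos hx0] at h1
    have hpos : (0:ℝ) < 1 - x := by linarith
    have h2 : |f x - Lm * (1-x)| = |f x / (1 + -x) - Lm| * (1-x) := by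
      have hne : (1:ℝ) + -x ≠ 0 := by linarith
      have hx1 : f x - Lm * (1-x) = (f x / (1 + -x) - Lm) * (1-x) := by
        field_simp
        ring
      rw [hx1, abs_mul, abs_of_pos hpos]
    rw [h2]
    exact mul_le_mul_of_nonneg_right h1.le hpos.le
  -- uniform continuity on [-M, M]
  have hUC : UniformContinuousOn f (Set.Icc (-M) M) :=
    (isCompact_Icc).uniformContinuousOn_of_continuous hc.continuousOn
  obtain ⟨δ, hδ, hδ'⟩ := Metric.uniformContinuousOn_iff.1 hUC (ε/2) (by linarith)
  -- grid
  set n : ℕ := ⌈2*M/δ⌉₊ + 1 with hn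
  have hn0 : 0 < n := Nat.succ_pos _
  have hnR : (0:ℝ) < n := by exact_mod_cast hn0
  set Δ : ℝ := 2*M/n with hΔ
  have hΔpos : 0 < Δ := by positivity
  have hΔδ : Δ < δ := by
    have h1 : 2*M/δ < (n:ℝ) := by
      refine lt_of_le_of_lt (Nat.le_ceil _) ?_
      exact_mod_cast Nat.lt_succ_self _
    have h2 : 2*M < (n:ℝ) * δ := (div_lt_iff₀ hδ).1 h1
    rw [hΔ, div_lt_iff₀ hnR]
    linarith
  set c : ℕ → ℝ := fun i => -M + i * Δ with hcdef
  have hc0 : c 0 = -M := by simp [hcdef]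
  have hcn : c n = M := by
    have : (n:ℝ) * Δ = 2*M := by
      rw [hΔ]
      field_simp
    simp only [hcdef, this]
    ring
  have hcsucc : ∀ i : ℕ, c (i+1) = c i + Δ := by
    intro i
    simp only [hcdef]
    push_cast
    ring
  have hcmono : ∀ i k : ℕ, i ≤ k → c i ≤ c k := by
    intro i k hik
    simp only [hcdef]
    have : (i:ℝ) ≤ k := by exact_mod_cast hik
    nlinarith
  set m : ℕ → ℝ := fun i => (f (c (i+1)) - f (c i)) / Δ with hmdef
  clear_value M n Δ c m
  -- ReLU basic facts
  have rzero : ∀ t : ℝ, t ≤ 0 → ReLU t = 0 := fun t ht => max_eq_right ht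
  have rid : ∀ t : ℝ, 0 ≤ t → ReLU t = t := fun t ht => max_eq_left ht
  -- the approximant
  set S : ℝ → ℝ := fun x => ∑ i ∈ Finset.range n, m i * (ReLU (x - c i) - ReLU (x - c (i+1)))
    with hSdef
  set h : ℝ → ℝ := fun x => f (-M) + S x + Lp * ReLU (x - M) + Lm * ReLU (-x - M) with hhdef
  clear_value S h
  refine ⟨h, ?_, ?_⟩
  · -- membership in the span
    have heq : h = (f (-M)) • (fun _ : ℝ => (1:ℝ)) +
        (∑ i ∈ Finset.range n,
          m i • ((fun x : ℝ => ReLU (x - c i)) - (fun x : ℝ => ReLU (x - c (i+1))))) +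
        Lp • (fun x : ℝ => ReLU (x - M)) + Lm • (fun x : ℝ => ReLU (-x - M)) := by
      funext x
      simp only [hhdef, hSdef, Pi.add_apply, Pi.smul_apply, Pi.sub_apply, Finset.sum_apply,
        smul_eq_mul, mul_one]
    rw [heq]
    refine add_mem (add_mem (add_mem (Submodule.smul_mem _ _ mem_X_one) ?_)
      (Submodule.smul_mem _ _ (mem_X_shift M))) (Submodule.smul_mem _ _ (mem_X_neg M))
    exact Submodule.sum_mem _ fun i _ =>
      Submodule.smul_mem _ _ (sub_mem (mem_X_shift (c i)) (mem_X_shift (c (i+1))))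
  · -- approximation bound
    have hΔne : Δ ≠ 0 := ne_of_gt hΔpos
    have hS_left : ∀ x : ℝ, x ≤ -M → S x = 0 := by
      intro x hx
      simp only [hSdef]
      refine Finset.sum_eq_zero fun i _ => ?_
      have h1 : x ≤ c i := le_trans hx (hc0 ▸ hcmono 0 i (Nat.zero_le i))
      have h2 : x ≤ c (i+1) := le_trans h1 (by rw [hcsucc]; linarith)
      rw [rzero _ (by linarith), rzero _ (by linarith)]
      ring
    have hterm_full : ∀ (i : ℕ) (x : ℝ), c (i+1) ≤ x →
        m i * (ReLU (x - c i) - ReLU (x - c (i+1))) = f (c (i+1)) - f (c i) := by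
      intro i x hx
      have h2 : c i ≤ x := le_trans (by rw [hcsucc]; linarith) hx
      rw [rid _ (by linarith), rid _ (by linarith)]
      have harg : x - c i - (x - c (i+1)) = Δ := by rw [hcsucc]; ring
      rw [harg]
      simp only [hmdef]
      exact div_mul_cancel₀ _ hΔne
    have hS_right : ∀ x : ℝ, M ≤ x → S x = f M - f (-M) := by
      intro x hx
      simp only [hSdef]
      have hco : ∀ i ∈ Finset.range n, m i * (ReLU (x - c i) - ReLU (x - c (i+1)))
          = f (c (i+1)) - f (c i) := by
        intro i hi
        have hi' : i + 1 ≤ n := Finset.mem_range.1 hi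
        exact hterm_full i x (le_trans (hcn ▸ hcmono (i+1) n hi') hx)
      rw [Finset.sum_congr rfl hco, Finset.sum_range_sub (fun i => f (c i)), hc0, hcn]
    have hS_mid : ∀ (j : ℕ) (x : ℝ), j + 1 ≤ n → c j ≤ x → x ≤ c (j+1) →
        S x = (f (c j) - f (-M)) + m j * (x - c j) := by
      intro j x hjn hcjx hxcj
      have hsplit : S x = ∑ i ∈ Finset.range (j+1),
          m i * (ReLU (x - c i) - ReLU (x - c (i+1))) := by
        simp only [hSdef]
        refine (Finset.sum_subset (Finset.range_subset_range.2 hjn) fun i hi hni => ?_).symm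
        have hij : j + 1 ≤ i := by
          by_contra hcon
          exact hni (Finset.mem_range.2 (not_le.1 hcon))
        have h1 : x ≤ c i := le_trans hxcj (hcmono (j+1) i hij)
        have h2 : x ≤ c (i+1) := le_trans h1 (by rw [hcsucc]; linarith)
        rw [rzero _ (by linarith), rzero _ (by linarith)]
        ring
      rw [hsplit, Finset.sum_range_succ]
      have hsum : ∑ i ∈ Finset.range j, m i * (ReLU (x - c i) - ReLU (x - c (i+1)))
          = f (c j) - f (-M) := by
        have hco : ∀ i ∈ Finset.range j, m i * (ReLU (x - c i) - ReLU (x - c (i+1)))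
            = f (c (i+1)) - f (c i) := by
          intro i hi
          have hij : i + 1 ≤ j := Finset.mem_range.1 hi
          exact hterm_full i x (le_trans (hcmono (i+1) j hij) hcjx)
        rw [Finset.sum_congr rfl hco, Finset.sum_range_sub (fun i => f (c i)), hc0]
      rw [hsum, rid _ (by linarith), rzero _ (by linarith)]
      ring
    -- main estimate
    intro x
    have hone : (1:ℝ) ≤ 1 + |x| := le_add_of_nonneg_right (abs_nonneg x)
    rcases le_total x (-M) with hxM | hxM
    · -- left tail
      have hSx : S x = 0 := hS_left x hxM
      have hx0 : x ≤ 0 := le_trans hxM (by linarith)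
      have hhx : h x = f (-M) + Lm * (-x - M) := by
        simp only [hhdef]
        rw [hSx, rzero (x - M) (by linarith), rid (-x - M) (by linarith)]
        ring
      have e1 : |f x - Lm * (1 - x)| ≤ ε/3 * (1 - x) := hbot x hxM
      have e2 : |f (-M) - Lm * (1 + M)| ≤ ε/3 * (1 + M) := by
        have := hbot (-M) le_rfl
        have h1M : (1:ℝ) - -M = 1 + M := by ring
        rwa [h1M] at this
      have key : |f x - h x| ≤ 2*ε/3 * (1 - x) := by
        have hfo : f x - h x = (f x - Lm * (1 - x)) + (Lm * (1 + M) - f (-M)) := by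
          rw [hhx]; ring
        rw [hfo]
        calc |(f x - Lm * (1 - x)) + (Lm * (1 + M) - f (-M))|
            ≤ |f x - Lm * (1 - x)| + |Lm * (1 + M) - f (-M)| := abs_add_le _ _
          _ ≤ ε/3 * (1 - x) + ε/3 * (1 + M) := by
              rw [abs_sub_comm (Lm * (1 + M)) (f (-M))]
              linarith
          _ ≤ 2*ε/3 * (1 - x) := by nlinarith
      rw [abs_of_nonpos hx0, div_lt_iff₀ (by linarith : (0:ℝ) < 1 + -x)]
      nlinarith
    · rcases le_total x M with hxM2 | hxM2
      · -- middle
        set j : ℕ := min ⌊(x + M)/Δ⌋₊ (n-1) with hj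
        have hjn : j + 1 ≤ n := by
          have : j ≤ n - 1 := min_le_right _ _
          omega
        have hxMnn : (0:ℝ) ≤ x + M := by linarith
        have hcjx : c j ≤ x := by
          have hle : (j:ℝ) ≤ (x + M)/Δ := by
            have h1 : j ≤ ⌊(x + M)/Δ⌋₊ := min_le_left _ _
            calc (j:ℝ) ≤ (⌊(x + M)/Δ⌋₊ : ℝ) := by exact_mod_cast h1
              _ ≤ (x+M)/Δ := Nat.floor_le (div_nonneg hxMnn hΔpos.le)
          have h2 : (j:ℝ) * Δ ≤ x + M := by
            rw [← le_div_iff₀ hΔpos]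
            exact hle
          simp only [hcdef]
          linarith
        have hxcj : x ≤ c (j+1) := by
          rcases le_or_gt (⌊(x + M)/Δ⌋₊) (n-1) with hfl | hfl
          · have hjf : j = ⌊(x + M)/Δ⌋₊ := min_eq_left hfl
            have h1 : (x + M)/Δ < (j:ℝ) + 1 := by
              rw [hjf]
              push_cast
              exact Nat.lt_floor_add_one _
            have h2 : x + M < ((j:ℝ) + 1) * Δ := by
              rw [div_lt_iff₀ hΔpos] at h1
              linarith
            simp only [hcdef]
            push_cast
            linarith
          · have hjf : j = n - 1 := min_eq_right hfl.le
            have hj1 : j + 1 = n := by omega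
            rw [hj1, hcn]
            exact hxM2
        clear_value j
        have hSx := hS_mid j x hjn hcjx hxcj
        have hcjmem : c j ∈ Set.Icc (-M) M :=
          ⟨hc0 ▸ hcmono 0 j (Nat.zero_le _), le_trans hcjx hxM2⟩
        have hcj1mem : c (j+1) ∈ Set.Icc (-M) M :=
          ⟨le_trans hxM hxcj, hcn ▸ hcmono (j+1) n hjn⟩
        have hxmem : x ∈ Set.Icc (-M) M := ⟨hxM, hxM2⟩
        have hcs := hcsucc j
        have hdist1 : dist (c j) x < δ := by
          rw [Real.dist_eq, abs_of_nonpos (by linarith)]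
          linarith
        have hdist2 : dist (c (j+1)) x < δ := by
          rw [Real.dist_eq, abs_of_nonneg (by linarith)]
          linarith
        have e1 : |f x - f (c j)| < ε/2 := by
          have := hδ' _ hcjmem _ hxmem hdist1
          rw [Real.dist_eq, abs_sub_comm] at this
          exact this
        have e2 : |f x - f (c (j+1))| < ε/2 := by
          have := hδ' _ hcj1mem _ hxmem hdist2
          rw [Real.dist_eq, abs_sub_comm] at this
          exact this
        set s : ℝ := (x - c j)/Δ with hs
        have hs0 : 0 ≤ s := div_nonneg (by linarith) hΔpos.le
        have hs1 : s ≤ 1 := by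
          rw [hs, div_le_one hΔpos]
          linarith
        have hmj : m j * (x - c j) = s * (f (c (j+1)) - f (c j)) := by
          simp only [hmdef, hs]
          rw [div_mul_eq_mul_div, mul_div_assoc]
          ring
        clear_value s
        have hform : f x - h x = (1-s)*(f x - f (c j)) + s*(f x - f (c (j+1))) := by
          have hhx : h x = f (c j) + m j * (x - c j) := by
            simp only [hhdef]
            rw [hSx, rzero (x - M) (by linarith), rzero (-x - M) (by linarith)]
            ring
          rw [hhx, hmj]
          ring
        have key : |f x - h x| ≤ ε/2 := by
          rw [hform]
          calc |(1-s)*(f x - f (c j)) + s*(f x - f (c (j+1)))|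
              ≤ |(1-s)*(f x - f (c j))| + |s*(f x - f (c (j+1)))| := abs_add_le _ _
            _ = (1-s)*|f x - f (c j)| + s*|f x - f (c (j+1))| := by
                rw [abs_mul, abs_mul, abs_of_nonneg (by linarith : (0:ℝ) ≤ 1 - s),
                  abs_of_nonneg hs0]
            _ ≤ ε/2 := by
                nlinarith [abs_nonneg (f x - f (c j)), abs_nonneg (f x - f (c (j+1)))]
        have hd : |f x - h x| / (1+|x|) ≤ |f x - h x| := div_le_self (abs_nonneg _) hone
        linarith
      · -- right tail
        have hSx : S x = f M - f (-M) := hS_right x hxM2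
        have hhx : h x = f M + Lp * (x - M) := by
          simp only [hhdef]
          rw [hSx, rid (x - M) (by linarith), rzero (-x - M) (by linarith)]
          ring
        have e1 : |f x - Lp * (1 + x)| ≤ ε/3 * (1 + x) := htop x hxM2
        have e2 : |f M - Lp * (1 + M)| ≤ ε/3 * (1 + M) := htop M le_rfl
        have hx0 : (0:ℝ) ≤ x := le_trans hMpos.le hxM2
        have key : |f x - h x| ≤ 2*ε/3 * (1 + x) := by
          have hfo : f x - h x = (f x - Lp * (1 + x)) + (Lp * (1 + M) - f M) := by
            rw [hhx]; ring
          rw [hfo]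
          calc |(f x - Lp * (1 + x)) + (Lp * (1 + M) - f M)|
              ≤ |f x - Lp * (1 + x)| + |Lp * (1 + M) - f M| := abs_add_le _ _
            _ ≤ ε/3 * (1 + x) + ε/3 * (1 + M) := by
                rw [abs_sub_comm (Lp * (1 + M)) (f M)]
                linarith
            _ ≤ 2*ε/3 * (1 + x) := by nlinarith
        rw [abs_of_nonneg hx0, div_lt_iff₀ (by linarith : (0:ℝ) < 1 + x)]
        nlinarith
end
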